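/- Let m̂ ∈ P₂(ℝ^d), R > 0, φ ∈ UC_m̂, κ ∈ (0,1], ε ∈ (0,1]. Assume that for every m ∈ G_R^κ there exists an Ekeland point for (φ,κ,ε,m), and that ω_R^ε(M_κ^ε(R)) + εκ√(I(R)) + ε·M_κ^ε(R) < I(R)/2. Then G_R^κ ⊆ O_R(m̂). -/

import Mathlib

open MeasureTheory Set Filter Topology
open scoped ENNReal NNReal InnerProductSpace

noncomputable section

/-- `ℝ^d` with the Euclidean structure. -/
abbrev Ed (d : ℕ) : Type := EuclideanSpace ℝ (Fin d)

/-- A Borel probability measure with finite second moment. -/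
def IsP2Meas {E : Type*} [NormedAddCommGroup E] [MeasurableSpace E] (μ : Measure E) : Prop :=
  IsProbabilityMeasure μ ∧ ∫⁻ x, (‖x‖₊ : ℝ≥0∞) ^ 2 ∂μ < ⊤

/-- The Wasserstein space `P₂(ℝ^d)` of Borel probability measures with finite second moment. -/
def P2 (d : ℕ) : Type := {μ : Measure (Ed d) // IsP2Meas μ}

/-- `ς₂(μ)`, the square root of the second moment of `μ`. -/
def varsigma2 {d : ℕ} (μ : P2 d) : ℝ :=
  Real.sqrt (∫⁻ x, (‖x‖₊ : ℝ≥0∞) ^ 2 ∂μ.1).toReal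

/-- `π` is a plan (coupling) between `μ` and `ν`. -/
def IsCoupling {d : ℕ} (π : Measure (Ed d × Ed d)) (μ ν : P2 d) : Prop :=
  π.map Prod.fst = μ.1 ∧ π.map Prod.snd = ν.1

/-- The quadratic transport cost of a plan. -/
def Wcost {d : ℕ} (π : Measure (Ed d × Ed d)) : ℝ≥0∞ :=
  ∫⁻ p, (‖p.1 - p.2‖₊ : ℝ≥0∞) ^ 2 ∂π

/-- The 2-Wasserstein distance. -/
def W2 {d : ℕ} (μ ν : P2 d) : ℝ :=
  Real.sqrt (⨅ π ∈ {π : Measure (Ed d × Ed d) | IsCoupling π μ ν}, Wcost π).toReal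

/-- `π ∈ Π_o(μ,ν)` : an optimal plan between `μ` and `ν`. -/
def IsOptPlan {d : ℕ} (π : Measure (Ed d × Ed d)) (μ ν : P2 d) : Prop :=
  IsCoupling π μ ν ∧ ∀ π' : Measure (Ed d × Ed d), IsCoupling π' μ ν → Wcost π ≤ Wcost π'

/-- The closed Wasserstein ball `B_R(m̂)`. -/
def ballW {d : ℕ} (mhat : P2 d) (R : ℝ) : Set (P2 d) := {μ | W2 mhat μ ≤ R}

/-- The open Wasserstein ball `O_R(m̂)`. -/
def oballW {d : ℕ} (mhat : P2 d) (R : ℝ) : Set (P2 d) := {μ | W2 mhat μ < R}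

/-- The Dirac measure at the origin as an element of `P₂(ℝ^d)`. -/
def dirac0 (d : ℕ) : P2 d :=
  ⟨Measure.dirac 0, ⟨by infer_instance, by rw [lintegral_dirac]; simp⟩⟩

/-- The class `UC_m̂` : nonnegative, uniformly continuous on every bounded set,
positive-definite at `m̂`. -/
structure UCmem {d : ℕ} (mhat : P2 d) (φ : P2 d → ℝ) : Prop where
  nonneg : ∀ μ : P2 d, 0 ≤ φ μ
  unif_cont : ∀ R > (0 : ℝ), ∀ η > (0 : ℝ), ∃ δ > (0 : ℝ), ∀ μ ν : P2 d,
    W2 mhat μ ≤ R → W2 mhat ν ≤ R → W2 μ ν ≤ δ → |φ μ - φ ν| ≤ η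
  zero_at : φ mhat = 0
  pos_off : ∀ μ : P2 d, μ ≠ mhat → 0 < φ μ

/-- The inf-convolution `φ_κ`. -/
def infConv {d : ℕ} (φ : P2 d → ℝ) (κ : ℝ) (m : P2 d) : ℝ :=
  ⨅ μ : P2 d, (φ μ + 1 / (2 * κ ^ 2) * W2 m μ ^ 2)

/-- `S(R) = sup_{μ ∈ B_R(m̂)} φ(μ)`. -/
def Sfun {d : ℕ} (mhat : P2 d) (φ : P2 d → ℝ) (R : ℝ) : ℝ := sSup (φ '' ballW mhat R)

/-- `I(R) = inf_{μ ∉ O_R(m̂)} φ(μ)`. -/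
def Ifun {d : ℕ} (mhat : P2 d) (φ : P2 d → ℝ) (R : ℝ) : ℝ := sInf (φ '' (oballW mhat R)ᶜ)

/-- `G_R = {μ : φ(μ) ≤ I(R)/2}`. -/
def Gset {d : ℕ} (mhat : P2 d) (φ : P2 d → ℝ) (R : ℝ) : Set (P2 d) :=
  {μ | φ μ ≤ Ifun mhat φ R / 2}

/-- `G_R^κ = {μ : φ_κ(μ) ≤ I(R)/2}`. -/
def GsetK {d : ℕ} (mhat : P2 d) (φ : P2 d → ℝ) (κ R : ℝ) : Set (P2 d) :=
  {μ | infConv φ κ μ ≤ Ifun mhat φ R / 2}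

/-- `𝓡(R) = sup{r ≥ 0 : B_r(m̂) ⊆ G_R}`. -/
def Rfun {d : ℕ} (mhat : P2 d) (φ : P2 d → ℝ) (R : ℝ) : ℝ :=
  sSup {r : ℝ | 0 ≤ r ∧ ballW mhat r ⊆ Gset mhat φ R}

/-- `M_κ^ε(R) = κ√(2S(R)+ε²κ²) − εκ²`. -/
def Mke {d : ℕ} (mhat : P2 d) (φ : P2 d → ℝ) (κ ε R : ℝ) : ℝ :=
  κ * Real.sqrt (2 * Sfun mhat φ R + ε ^ 2 * κ ^ 2) - ε * κ ^ 2

/-- `M^ε(R) = R + √(2S(R)+ε²)`. -/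
def Me {d : ℕ} (mhat : P2 d) (φ : P2 d → ℝ) (ε R : ℝ) : ℝ :=
  R + Real.sqrt (2 * Sfun mhat φ R + ε ^ 2)

/-- `ω_R^ε(δ)`, the modulus of continuity of `φ` on `B_{M^ε(R)}(m̂)`. -/
def omegaR {d : ℕ} (mhat : P2 d) (φ : P2 d → ℝ) (ε R δ : ℝ) : ℝ :=
  sSup {c : ℝ | ∃ ν₁ ν₂ : P2 d, W2 ν₁ ν₂ ≤ δ ∧ W2 mhat ν₁ ≤ Me mhat φ ε R ∧
    W2 mhat ν₂ ≤ Me mhat φ ε R ∧ c = |φ ν₁ - φ ν₂|}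

/-- `K_κ^ε(R) = εκ² + κ√(ε²κ² + 2ω_R^ε(M_κ^ε(R)))`. -/
def Kke {d : ℕ} (mhat : P2 d) (φ : P2 d → ℝ) (κ ε R : ℝ) : ℝ :=
  ε * κ ^ 2 + κ * Real.sqrt (ε ^ 2 * κ ^ 2 + 2 * omegaR mhat φ ε R (Mke mhat φ κ ε R))

/-- `N_κ^ε(R,m) = εκ√(2φ_κ(m)) + ε·M_κ^ε(R)`. -/
def Nke {d : ℕ} (mhat : P2 d) (φ : P2 d → ℝ) (κ ε R : ℝ) (m : P2 d) : ℝ :=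
  ε * κ * Real.sqrt (2 * infConv φ κ m) + ε * Mke mhat φ κ ε R

/-- `μ̄` is an Ekeland point for `(φ,κ,ε,m)`. -/
def EkelandPt {d : ℕ} (φ : P2 d → ℝ) (κ ε : ℝ) (m μb : P2 d) : Prop :=
  (φ μb + 1 / (2 * κ ^ 2) * W2 m μb ^ 2 ≤ φ m - ε * W2 μb m) ∧
  ∀ μ : P2 d, φ μb + 1 / (2 * κ ^ 2) * W2 m μb ^ 2 ≤
    φ μ + 1 / (2 * κ ^ 2) * W2 m μ ^ 2 + ε * W2 μb μ

/-- The proximal subgradient inequality at `m` with target `μ`, slope measure `α`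
and parameter `σ`. -/
def ProxIneq {d : ℕ} (φ : P2 d → ℝ) (ε σ : ℝ) (m : P2 d)
    (α : Measure (Ed d × Ed d)) (μ : P2 d) : Prop :=
  ∀ β : Measure (Ed d × Ed d × Ed d), IsP2Meas β →
    IsCoupling (β.map fun z => (z.1, z.2.1)) m μ →
    β.map (fun z => (z.1, z.2.2)) = α →
    φ m + ∫ z, ⟪z.2.2, z.2.1 - z.1⟫_ℝ ∂β - σ * ∫ z, ‖z.2.1 - z.1‖ ^ 2 ∂β
      - ε * W2 m μ ≤ φ μ

/-- `α ∈ ∂_P^ε φ(m)` : proximal `ε`-subgradient. -/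
def ProxSubgrad {d : ℕ} (φ : P2 d → ℝ) (ε : ℝ) (m : P2 d)
    (α : Measure (Ed d × Ed d)) : Prop :=
  IsP2Meas α ∧ ∃ σ > (0 : ℝ), ∃ r > (0 : ℝ), ∀ μ : P2 d, W2 m μ ≤ r → ProxIneq φ ε σ m α μ

/-- `(φ,ψ)` is a control-Lyapunov pair at `m̂` for the dynamics `f`, with threshold `ε₀`. -/
structure IsCLP {d : ℕ} {U : Type*} (f : Ed d → P2 d → U → Ed d) (mhat : P2 d)
    (φ : P2 d → ℝ) (ψ : P2 d → ℝ → ℝ) (ε₀ : ℝ) : Prop where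
  phi_uc : UCmem mhat φ
  psi_pos : ∀ (m : P2 d) (ε : ℝ), 0 < ε → 0 < ψ m ε
  psi_cont : ∀ (m : P2 d) (ε : ℝ), 0 < ε → ∀ η > (0 : ℝ), ∃ δ > (0 : ℝ),
    ∀ (m' : P2 d) (ε' : ℝ), 0 < ε' → W2 m m' < δ → |ε - ε'| < δ → |ψ m ε - ψ m' ε'| < η
  level_bdd : ∀ c : ℝ, ∃ K : ℝ, ∀ μ : P2 d, φ μ ≤ c → W2 mhat μ ≤ K
  psi_inf_pos : ∀ r R : ℝ, 0 < r → r < R → ∀ ε > (0 : ℝ), ∃ g > (0 : ℝ),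
    ∀ m : P2 d, W2 mhat m ≤ R → ¬ W2 mhat m < r → g ≤ ψ m ε
  psi_mono : ∀ (m : P2 d) (ε ε' : ℝ), 0 < ε → ε ≤ ε' → ψ m ε ≤ ψ m ε'
  eps0_pos : 0 < ε₀
  decrease : ∀ ε : ℝ, 0 < ε → ε < ε₀ → ∀ (m : P2 d) (α : Measure (Ed d × Ed d)),
    ProxSubgrad φ ε m α → ∃ u : U, ∫ z, ⟪z.2, f z.1 m u⟫_ℝ ∂α ≤ -ψ m ε

/-- A partition of `[0,∞)`. -/
def IsPartition (θ : ℕ → ℝ) : Prop :=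
  θ 0 = 0 ∧ StrictMono θ ∧ Tendsto θ atTop atTop

/-- The steps of the partition `θ` lie in `[δ₁, δ₂]` (i.e. `θ ∈ Θ(δ₁,δ₂)`). -/
def StepIn (θ : ℕ → ℝ) (δ₁ δ₂ : ℝ) : Prop :=
  ∀ i : ℕ, δ₁ ≤ θ (i + 1) - θ i ∧ θ (i + 1) - θ i ≤ δ₂

/-- `W₂`-continuity of a measure-valued curve on `[a,b]`. -/
def W2ContinuousOn {d : ℕ} (m : ℝ → P2 d) (a b : ℝ) : Prop :=
  ∀ t ∈ Icc a b, ∀ η > (0 : ℝ), ∃ δ > (0 : ℝ), ∀ s ∈ Icc a b, |s - t| < δ →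
    W2 (m s) (m t) < η

/-- `m` is a `W₂`-continuous distributional solution of the non-local continuity equation
`∂_t m_t + div(f(x,m_t,u) m_t) = 0` on `[a,b]` with constant control `u`. -/
def SolvesCE {d : ℕ} {U : Type*} (f : Ed d → P2 d → U → Ed d) (u : U)
    (m : ℝ → P2 d) (a b : ℝ) : Prop :=
  W2ContinuousOn m a b ∧
  ∀ χ : Ed d × ℝ → ℝ, ContDiff ℝ (⊤ : ℕ∞) χ → HasCompactSupport χ →
    tsupport χ ⊆ univ ×ˢ Ioo a b →
    ∫ t in a..b, ∫ x, (deriv (fun s : ℝ => χ (x, s)) t +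
      fderiv ℝ (fun y : Ed d => χ (y, t)) x (f x (m t) u)) ∂(m t).1 = 0

/-- A `θ`-trajectory of the controlled continuity equation under the feedback `k`,
starting from `m_*`. -/
def IsTraj {d : ℕ} {U : Type*} (f : Ed d → P2 d → U → Ed d) (k : P2 d → U)
    (θ : ℕ → ℝ) (mstar : P2 d) (m : ℝ → P2 d) : Prop :=
  m 0 = mstar ∧ ∀ i : ℕ, SolvesCE f (k (m (θ i))) m (θ i) (θ (i + 1))

/-- The extremal-shift value `∫ ((x−y)/κ²)·f(x,m,u) dπ(x,y)`. -/
def shiftVal {d : ℕ} {U : Type*} (f : Ed d → P2 d → U → Ed d) (κ : ℝ)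
    (π : Measure (Ed d × Ed d)) (m : P2 d) (u : U) : ℝ :=
  ∫ p, ⟪(κ ^ 2)⁻¹ • (p.1 - p.2), f p.1 m u⟫_ℝ ∂π

/-- `k` is an extremal-shift feedback associated with the plan selection `πsel`. -/
def IsExtremalShift {d : ℕ} {U : Type*} (f : Ed d → P2 d → U → Ed d) (κ : ℝ)
    (πsel : P2 d → Measure (Ed d × Ed d)) (k : P2 d → U) : Prop :=
  ∀ (m : P2 d) (u : U), shiftVal f κ (πsel m) m (k m) ≤ shiftVal f κ (πsel m) m u

/-- `C₂(R)` (computed with time-step bound `δ` and `s = ς₂(m̂)`). -/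
def C2const (C₁ δ s R : ℝ) : ℝ :=
  C₁ * Real.exp (C₁ * δ) * (1 + 2 * (C₁ * δ + s + R) * Real.exp (2 * C₁ * δ))

/-- `C₃(R)` (computed with time-step bound `δ` and `s = ς₂(m̂)`). -/
def C3const (C₀ C₁ δ s R : ℝ) : ℝ :=
  C₀ * (C₁ * Real.exp (C₁ * δ) * (1 + 2 * (C₁ * δ + s + R) * Real.exp (2 * C₁ * δ))
    + C2const C₁ δ s R)

/-- A feedback `k` is s-stabilizing at `m̂`. -/
def SStabilizing {d : ℕ} {U : Type*} (f : Ed d → P2 d → U → Ed d) (mhat : P2 d)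
    (k : P2 d → U) : Prop :=
  ∃ M : ℝ → ℝ, (∀ R > (0 : ℝ), 0 < M R) ∧
    Tendsto M (nhdsWithin 0 (Ioi 0)) (nhds 0) ∧
    ∀ r R : ℝ, 0 < r → r < R → ∃ δ > (0 : ℝ), ∃ T > (0 : ℝ),
      ∀ δhat : ℝ, 0 < δhat → δhat < δ →
      ∀ θ : ℕ → ℝ, IsPartition θ → StepIn θ δhat δ →
      ∀ mstar : P2 d, W2 mhat mstar ≤ R →
      ∀ m : ℝ → P2 d, IsTraj f k θ mstar m →
        (∀ t : ℝ, T ≤ t → W2 mhat (m t) ≤ r) ∧ (∀ t : ℝ, 0 ≤ t → W2 mhat (m t) ≤ M R)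

/-!
Suppose `m ∈ G_R^κ` lies outside `O_R(m̂)` and let `x > I(R)`. An almost minimizer `ν` of the
inf-convolution at `m` has `2 φ(ν) < x` and `W₂(m, ν) < κ √x`, so `ν ∈ O_R(m̂)`. Gluing couplings
makes `W₂` a metric, and the displacement interpolation between `ν` and `m` is a Lipschitz curve,
so it crosses the sphere `W₂(m̂, ·) = R` at some `μ` with `W₂(ν, μ) < κ √x`. Then
`I(R) ≤ φ(μ) ≤ S(R)`, which for `x` close to `I(R)` gives `κ √x ≤ M_κ^ε(R)`, hence
`I(R) ≤ φ(μ) ≤ φ(ν) + ω_R^ε(M_κ^ε(R)) < x / 2 + ω_R^ε(M_κ^ε(R))`, contradicting the smallness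
condition.
-/

open ProbabilityTheory

theorem Measure.exists_glue {α β γ : Type*} [MeasurableSpace α] [MeasurableSpace β]
    [MeasurableSpace γ] [StandardBorelSpace β] [Nonempty β] [StandardBorelSpace γ] [Nonempty γ]
    (σ : Measure (α × β)) (τ : Measure (α × γ)) [IsFiniteMeasure σ] [IsFiniteMeasure τ]
    (h : σ.fst = τ.fst) :
    ∃ ξ : Measure (α × β × γ),
      ξ.map (Prod.map id Prod.fst) = σ ∧ ξ.map (Prod.map id Prod.snd) = τ := by
  refine ⟨σ.fst ⊗ₘ (σ.condKernel ×ₖ τ.condKernel), ?_, ?_⟩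
  · rw [← Measure.compProd_map measurable_fst, ← Kernel.fst_eq, Kernel.fst_prod]
    exact σ.disintegrate _
  · rw [← Measure.compProd_map measurable_snd, ← Kernel.snd_eq, Kernel.snd_prod, h]
    exact τ.disintegrate _

lemma lintegral_nnnorm_sq_eq_eLpNorm_sq {α E : Type*} [MeasurableSpace α] [NormedAddCommGroup E]
    (f : α → E) (μ : Measure α) :
    ∫⁻ x, (‖f x‖₊ : ℝ≥0∞) ^ 2 ∂μ = eLpNorm f 2 μ ^ 2 := by
  have := eLpNorm_nnreal_pow_eq_lintegral (f := f) (μ := μ) (p := 2) two_ne_zero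
  norm_num [enorm_eq_nnnorm] at this
  exact this.symm

lemma isP2Meas_iff {E : Type*} [NormedAddCommGroup E] [MeasurableSpace E] [BorelSpace E]
    [SecondCountableTopology E] (μ : Measure E) :
    IsP2Meas μ ↔ IsProbabilityMeasure μ ∧ MemLp id 2 μ := by
  rw [IsP2Meas, MemLp, and_iff_right aestronglyMeasurable_id,
    lintegral_nnnorm_sq_eq_eLpNorm_sq (fun x => x)]
  simp only [ENNReal.pow_lt_top_iff, OfNat.ofNat_ne_zero, or_false, and_congr_right_iff]
  exact fun _ => Iff.rfl

theorem le_add_natCeil_of_abs_sub_le {f : ℝ → ℝ} {h : ℝ} (hh : 0 < h)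
    (hf : ∀ s ∈ Icc (0 : ℝ) 1, ∀ t ∈ Icc (0 : ℝ) 1, |s - t| ≤ h → |f s - f t| ≤ 1) :
    f 1 ≤ f 0 + ⌈h⁻¹⌉₊ := by
  set N := ⌈h⁻¹⌉₊
  have hN : (0 : ℝ) < N := Nat.cast_pos.2 (Nat.ceil_pos.2 (inv_pos.2 hh))
  have hstep : (N : ℝ)⁻¹ ≤ h := inv_le_of_inv_le₀ hh (Nat.le_ceil _)
  have hmem : ∀ i ≤ N, (i : ℝ) / N ∈ Icc (0 : ℝ) 1 := fun i hi =>
    ⟨by positivity, div_le_one_of_le₀ (by exact_mod_cast hi) hN.le⟩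
  have key : ∀ i ≤ N, f (i / N) ≤ f 0 + i := by
    intro i
    induction i with
    | zero => simp
    | succ i ih =>
      intro hi
      have hclose : |f ((i + 1 : ℕ) / N) - f (i / N)| ≤ 1 := by
        refine hf _ (hmem _ hi) _ (hmem _ (Nat.le_of_succ_le hi)) ?_
        rwa [← sub_div, Nat.cast_succ, add_sub_cancel_left, abs_of_pos (by positivity), one_div]
      push_cast at hclose ⊢
      linarith [ih (Nat.le_of_succ_le hi), (abs_sub_le_iff.1 hclose).1]
  simpa [hN.ne'] using key N le_rfl

lemma exists_gt_and_add_lt_and_add_mul_sqrt_lt {I a c : ℝ} (ha : 2 * a < I)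
    (hc : 2 * c * √I < I) : ∃ x, I < x ∧ x + 2 * a < 2 * I ∧ x + 2 * c * √x < 2 * I := by
  have h₁ : ∀ᶠ x in 𝓝 I, x + 2 * a < 2 * I :=
    (continuous_add_const _).continuousAt.eventually_lt continuousAt_const (by linarith)
  have h₂ : ∀ᶠ x in 𝓝 I, x + 2 * c * √x < 2 * I :=
    (by fun_prop : Continuous fun x => x + 2 * c * √x).continuousAt.eventually_lt
      continuousAt_const (by linarith)
  exact (eventually_mem_nhdsWithin.and ((h₁.and h₂).filter_mono nhdsWithin_le_nhds)).exists
    (f := 𝓝[>] I)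

section Wasserstein

variable {d : ℕ}

lemma P2.memLp_id (μ : P2 d) : MemLp id 2 μ.1 := ((isP2Meas_iff μ.1).1 μ.2).2

lemma memLp_of_map_eq {Ω : Type*} [MeasurableSpace Ω] {ξ : Measure Ω} {f : Ω → Ed d}
    (hf : Measurable f) {μ : P2 d} (h : ξ.map f = μ.1) : MemLp f 2 ξ := by
  have hμ := μ.memLp_id
  rw [← h] at hμ
  exact hμ.comp_of_map hf.aemeasurable

lemma Wcost_eq_eLpNorm_sq (π : Measure (Ed d × Ed d)) :
    Wcost π = eLpNorm (fun p => p.1 - p.2) 2 π ^ 2 :=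
  lintegral_nnnorm_sq_eq_eLpNorm_sq _ π

lemma IsCoupling.eLpNorm_ne_top {π : Measure (Ed d × Ed d)} {μ ν : P2 d}
    (hπ : IsCoupling π μ ν) : eLpNorm (fun p => p.1 - p.2) 2 π ≠ ⊤ :=
  ((memLp_of_map_eq measurable_fst hπ.1).sub (memLp_of_map_eq measurable_snd hπ.2)).eLpNorm_ne_top

lemma sqrt_toReal_Wcost (π : Measure (Ed d × Ed d)) :
    √(Wcost π).toReal = (eLpNorm (fun p => p.1 - p.2) 2 π).toReal := by
  rw [Wcost_eq_eLpNorm_sq, ENNReal.toReal_pow, Real.sqrt_sq ENNReal.toReal_nonneg]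

lemma isCoupling_prod (μ ν : P2 d) : IsCoupling (μ.1.prod ν.1) μ ν := by
  have : IsProbabilityMeasure μ.1 := μ.2.1
  have : IsProbabilityMeasure ν.1 := ν.2.1
  exact ⟨by simp, by simp⟩

lemma W2_nonneg (μ ν : P2 d) : 0 ≤ W2 μ ν := Real.sqrt_nonneg _

lemma W2_le_of_isCoupling {π : Measure (Ed d × Ed d)} {μ ν : P2 d} (hπ : IsCoupling π μ ν) :
    W2 μ ν ≤ (eLpNorm (fun p => p.1 - p.2) 2 π).toReal := by
  rw [← sqrt_toReal_Wcost π]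
  refine Real.sqrt_le_sqrt (ENNReal.toReal_mono ?_ (biInf_le _ hπ))
  rw [Wcost_eq_eLpNorm_sq]
  exact ENNReal.pow_ne_top hπ.eLpNorm_ne_top

lemma exists_isCoupling_eLpNorm_lt {μ ν : P2 d} {c : ℝ} (h : W2 μ ν < c) :
    ∃ π, IsCoupling π μ ν ∧ (eLpNorm (fun p => p.1 - p.2) 2 π).toReal < c := by
  have hc : 0 < c := (W2_nonneg μ ν).trans_lt h
  have hprod := isCoupling_prod μ ν
  have hfin : (⨅ π ∈ {π | IsCoupling π μ ν}, Wcost π) ≠ ⊤ := by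
    refine ne_top_of_le_ne_top ?_ (biInf_le _ hprod)
    rw [Wcost_eq_eLpNorm_sq]
    exact ENNReal.pow_ne_top hprod.eLpNorm_ne_top
  rw [W2, Real.sqrt_lt' hc, ← ENNReal.lt_ofReal_iff_toReal_lt hfin] at h
  simp only [iInf_lt_iff] at h
  obtain ⟨π, hπ, hlt⟩ := h
  refine ⟨π, hπ, ?_⟩
  rw [← sqrt_toReal_Wcost π, Real.sqrt_lt' hc]
  exact ENNReal.toReal_lt_of_lt_ofReal hlt

lemma W2_le_eLpNorm_sub {Ω : Type*} [MeasurableSpace Ω] {ξ : Measure Ω} {f g : Ω → Ed d}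
    {μ ν : P2 d} (hf : Measurable f) (hg : Measurable g) (hfμ : ξ.map f = μ.1)
    (hgν : ξ.map g = ν.1) : W2 μ ν ≤ (eLpNorm (f - g) 2 ξ).toReal := by
  have hfg : Measurable fun ω => (f ω, g ω) := hf.prodMk hg
  have hπ : IsCoupling (ξ.map fun ω => (f ω, g ω)) μ ν :=
    ⟨by rw [Measure.map_map measurable_fst hfg]; exact hfμ,
      by rw [Measure.map_map measurable_snd hfg]; exact hgν⟩
  refine (W2_le_of_isCoupling hπ).trans_eq ?_
  rw [eLpNorm_map_measure (by fun_prop) hfg.aemeasurable]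
  rfl

lemma W2_le_symm (μ ν : P2 d) : W2 μ ν ≤ W2 ν μ := by
  refine le_of_forall_gt fun c hc => ?_
  obtain ⟨π, hπ, hlt⟩ := exists_isCoupling_eLpNorm_lt hc
  refine (W2_le_eLpNorm_sub measurable_snd measurable_fst hπ.2 hπ.1).trans_lt ?_
  rwa [show (Prod.snd - Prod.fst : Ed d × Ed d → Ed d) = -fun p => p.1 - p.2 from
    funext fun p => (neg_sub _ _).symm, eLpNorm_neg]

lemma W2_symm (μ ν : P2 d) : W2 μ ν = W2 ν μ :=
  (W2_le_symm μ ν).antisymm (W2_le_symm ν μ)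

lemma IsCoupling.isProbabilityMeasure {π : Measure (Ed d × Ed d)} {μ ν : P2 d}
    (hπ : IsCoupling π μ ν) : IsProbabilityMeasure π := by
  have : IsProbabilityMeasure (π.map Prod.fst) := hπ.1 ▸ μ.2.1
  exact (Measure.isProbabilityMeasure_map_iff measurable_fst.aemeasurable).1 this

theorem W2_triangle (μ ν ρ : P2 d) : W2 μ ρ ≤ W2 μ ν + W2 ν ρ := by
  refine le_of_forall_pos_lt_add fun ε hε => ?_
  obtain ⟨π₁, h₁, hlt₁⟩ :=
    exists_isCoupling_eLpNorm_lt (μ := ν) (ν := μ) (c := W2 μ ν + ε / 2)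
      (by rw [W2_symm]; linarith)
  obtain ⟨π₂, h₂, hlt₂⟩ := exists_isCoupling_eLpNorm_lt (μ := ν) (ν := ρ) (c := W2 ν ρ + ε / 2)
    (by linarith)
  have := h₁.isProbabilityMeasure
  have := h₂.isProbabilityMeasure
  obtain ⟨ξ, hξ₁, hξ₂⟩ := Measure.exists_glue π₁ π₂ (h₁.1.trans h₂.1.symm)
  have hμ : ξ.map (fun w => w.2.1) = μ.1 := by
    rw [← h₁.2, ← hξ₁, Measure.map_map measurable_snd (by fun_prop)]; rfl
  have hρ : ξ.map (fun w => w.2.2) = ρ.1 := by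
    rw [← h₂.2, ← hξ₂, Measure.map_map measurable_snd (by fun_prop)]; rfl
  have he₁ : eLpNorm (fun w : Ed d × Ed d × Ed d => w.2.1 - w.1) 2 ξ
      = eLpNorm (fun p => p.1 - p.2) 2 π₁ := by
    rw [← hξ₁, eLpNorm_map_measure (by fun_prop) (by fun_prop), ← eLpNorm_neg]
    congr 1; ext w; simp
  have he₂ : eLpNorm (fun w : Ed d × Ed d × Ed d => w.1 - w.2.2) 2 ξ
      = eLpNorm (fun p => p.1 - p.2) 2 π₂ := by
    rw [← hξ₂, eLpNorm_map_measure (by fun_prop) (by fun_prop)]; rfl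
  have hsplit : (fun w : Ed d × Ed d × Ed d => w.2.1) - (fun w => w.2.2)
      = (fun w => w.2.1 - w.1) + (fun w => w.1 - w.2.2) := by
    ext1 w; simp
  calc W2 μ ρ ≤ (eLpNorm ((fun w : Ed d × Ed d × Ed d => w.2.1) - (fun w => w.2.2)) 2 ξ).toReal :=
        W2_le_eLpNorm_sub (by fun_prop) (by fun_prop) hμ hρ
    _ ≤ (eLpNorm (fun p => p.1 - p.2) 2 π₁ + eLpNorm (fun p => p.1 - p.2) 2 π₂).toReal := by
        refine ENNReal.toReal_mono (ENNReal.add_ne_top.2 ⟨h₁.eLpNorm_ne_top, h₂.eLpNorm_ne_top⟩) ?_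
        rw [hsplit, ← he₁, ← he₂]
        exact eLpNorm_add_le (by fun_prop) (by fun_prop) one_le_two
    _ = (eLpNorm (fun p => p.1 - p.2) 2 π₁).toReal + (eLpNorm (fun p => p.1 - p.2) 2 π₂).toReal :=
        ENNReal.toReal_add h₁.eLpNorm_ne_top h₂.eLpNorm_ne_top
    _ < W2 μ ν + W2 ν ρ + ε := by linarith

lemma abs_W2_sub_W2_le (μ ν ρ : P2 d) : |W2 μ ν - W2 μ ρ| ≤ W2 ν ρ := by
  rw [abs_sub_le_iff]
  constructor
  · linarith [W2_triangle μ ρ ν, W2_symm ν ρ]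
  · linarith [W2_triangle μ ν ρ]

end Wasserstein

section Interpolation

variable {d : ℕ} {π : Measure (Ed d × Ed d)} {μ ν : P2 d}

def IsCoupling.interp (hπ : IsCoupling π μ ν) (t : ℝ) : P2 d :=
  ⟨π.map fun p => (1 - t) • p.1 + t • p.2, by
    have := hπ.isProbabilityMeasure
    refine (isP2Meas_iff _).2 ⟨Measure.isProbabilityMeasure_map (by fun_prop), ?_⟩
    refine (memLp_map_measure_iff (by fun_prop) (by fun_prop)).2 ?_
    exact ((memLp_of_map_eq measurable_fst hπ.1).const_smul (1 - t)).add
      ((memLp_of_map_eq measurable_snd hπ.2).const_smul t)⟩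

lemma IsCoupling.interp_zero (hπ : IsCoupling π μ ν) : hπ.interp 0 = μ := by
  refine Subtype.ext ?_
  simpa [IsCoupling.interp] using hπ.1

lemma IsCoupling.interp_one (hπ : IsCoupling π μ ν) : hπ.interp 1 = ν := by
  refine Subtype.ext ?_
  simpa [IsCoupling.interp] using hπ.2

lemma IsCoupling.W2_interp_le (hπ : IsCoupling π μ ν) (s t : ℝ) :
    W2 (hπ.interp s) (hπ.interp t) ≤ |s - t| * (eLpNorm (fun p => p.1 - p.2) 2 π).toReal := by
  refine (W2_le_eLpNorm_sub (by fun_prop) (by fun_prop) rfl rfl).trans_eq ?_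
  have : ((fun p : Ed d × Ed d => (1 - s) • p.1 + s • p.2) - fun p => (1 - t) • p.1 + t • p.2)
      = (t - s) • fun p => p.1 - p.2 := by
    ext1 p; simp only [Pi.sub_apply, Pi.smul_apply]; module
  rw [this, eLpNorm_const_smul, ENNReal.toReal_mul, toReal_enorm, Real.norm_eq_abs, abs_sub_comm]

lemma IsCoupling.W2_interp_le_of_mem_Icc (hπ : IsCoupling π μ ν) {t : ℝ} (ht : t ∈ Icc (0 : ℝ) 1) :
    W2 μ (hπ.interp t) ≤ (eLpNorm (fun p => p.1 - p.2) 2 π).toReal := by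
  have := hπ.W2_interp_le 0 t
  rw [hπ.interp_zero, zero_sub, abs_neg, abs_of_nonneg ht.1] at this
  exact this.trans (mul_le_of_le_one_left ENNReal.toReal_nonneg ht.2)

theorem exists_W2_eq_of_le_of_le {mhat ν m : P2 d} {R c : ℝ} (hν : W2 mhat ν ≤ R)
    (hm : R ≤ W2 mhat m) (hc : W2 ν m < c) : ∃ μ, W2 mhat μ = R ∧ W2 ν μ < c := by
  obtain ⟨π, hπ, hπc⟩ := exists_isCoupling_eLpNorm_lt hc
  set L := (eLpNorm (fun p => p.1 - p.2) 2 π).toReal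
  have hlip : LipschitzWith ⟨L, ENNReal.toReal_nonneg⟩ fun t => W2 mhat (hπ.interp t) := by
    refine LipschitzWith.of_dist_le_mul fun s t => ?_
    rw [Real.dist_eq, Real.dist_eq]
    change _ ≤ L * _
    rw [mul_comm]
    exact (abs_W2_sub_W2_le _ _ _).trans (hπ.W2_interp_le s t)
  obtain ⟨t, ht, htR⟩ := intermediate_value_Icc zero_le_one hlip.continuous.continuousOn
    (show R ∈ Icc _ _ by rw [hπ.interp_zero, hπ.interp_one]; exact ⟨hν, hm⟩)
  exact ⟨hπ.interp t, htR, (hπ.W2_interp_le_of_mem_Icc ht).trans_lt hπc⟩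

end Interpolation

section UCmem

variable {d : ℕ} {mhat : P2 d} {φ : P2 d → ℝ}

theorem UCmem.exists_le (hφ : UCmem mhat φ) (r : ℝ) :
    ∃ C, ∀ μ, W2 mhat μ ≤ r → φ μ ≤ C := by
  set r' := max r 0 + 1
  have hr' : 0 < r' := by positivity
  obtain ⟨δ, hδ, huc⟩ := hφ.unif_cont r' hr' 1 one_pos
  -- the number of `δ`-steps along the interpolation from `m̂` to `μ` does not depend on `μ`
  refine ⟨⌈(δ / r')⁻¹⌉₊, fun μ hμ => ?_⟩
  obtain ⟨π, hπ, hπr'⟩ := exists_isCoupling_eLpNorm_lt (c := r')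
    (hμ.trans_lt (by linarith [le_max_left r 0]))
  have hball : ∀ t ∈ Icc (0 : ℝ) 1, W2 mhat (hπ.interp t) ≤ r' := fun t ht =>
    (hπ.W2_interp_le_of_mem_Icc ht).trans hπr'.le
  have := le_add_natCeil_of_abs_sub_le (f := fun t => φ (hπ.interp t)) (by positivity)
    fun s hs t ht hst => huc _ _ (hball s hs) (hball t ht) <| (hπ.W2_interp_le s t).trans <|
      (mul_le_mul hst hπr'.le ENNReal.toReal_nonneg (by positivity)).trans_eq
        (div_mul_cancel₀ δ hr'.ne')
  simpa [hπ.interp_zero, hπ.interp_one, hφ.zero_at] using this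

lemma UCmem.Ifun_le (hφ : UCmem mhat φ) {R : ℝ} {μ : P2 d} (hμ : μ ∉ oballW mhat R) :
    Ifun mhat φ R ≤ φ μ :=
  csInf_le ⟨0, by rintro _ ⟨ν, -, rfl⟩; exact hφ.nonneg ν⟩ ⟨μ, hμ, rfl⟩

lemma UCmem.le_Sfun (hφ : UCmem mhat φ) {R : ℝ} {μ : P2 d} (hμ : μ ∈ ballW mhat R) :
    φ μ ≤ Sfun mhat φ R := by
  obtain ⟨C, hC⟩ := hφ.exists_le R
  exact le_csSup ⟨C, by rintro _ ⟨ν, hν, rfl⟩; exact hC ν hν⟩ ⟨μ, hμ, rfl⟩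

lemma UCmem.Sfun_nonneg (hφ : UCmem mhat φ) (R : ℝ) : 0 ≤ Sfun mhat φ R :=
  Real.sSup_nonneg (by rintro _ ⟨ν, -, rfl⟩; exact hφ.nonneg ν)

lemma omegaR_nonneg (mhat : P2 d) (φ : P2 d → ℝ) (ε R δ : ℝ) : 0 ≤ omegaR mhat φ ε R δ :=
  Real.sSup_nonneg (by rintro _ ⟨ν₁, ν₂, -, -, -, rfl⟩; exact abs_nonneg _)

lemma UCmem.sub_le_omegaR (hφ : UCmem mhat φ) {ε R δ : ℝ} {ν₁ ν₂ : P2 d}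
    (h₁₂ : W2 ν₁ ν₂ ≤ δ) (h₁ : W2 mhat ν₁ ≤ Me mhat φ ε R) (h₂ : W2 mhat ν₂ ≤ Me mhat φ ε R) :
    φ ν₁ - φ ν₂ ≤ omegaR mhat φ ε R δ := by
  obtain ⟨C, hC⟩ := hφ.exists_le (Me mhat φ ε R)
  refine (le_abs_self _).trans (le_csSup ⟨C, ?_⟩ ⟨ν₁, ν₂, h₁₂, h₁, h₂, rfl⟩)
  rintro _ ⟨μ₁, μ₂, -, hμ₁, hμ₂, rfl⟩
  rw [abs_sub_le_iff]
  constructor <;> linarith [hC μ₁ hμ₁, hC μ₂ hμ₂, hφ.nonneg μ₁, hφ.nonneg μ₂]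

lemma exists_of_two_mul_infConv_lt (hφ : ∀ μ, 0 ≤ φ μ) {κ x : ℝ} (hκ : 0 < κ) {m : P2 d}
    (h : 2 * infConv φ κ m < x) : ∃ ν, 2 * φ ν < x ∧ W2 m ν < κ * √x := by
  have : Nonempty (P2 d) := ⟨m⟩
  obtain ⟨ν, hν⟩ := exists_lt_of_ciInf_lt (show infConv φ κ m < x / 2 by linarith)
  have hcost : 0 ≤ 1 / (2 * κ ^ 2) * W2 m ν ^ 2 := by positivity
  have hW : W2 m ν ^ 2 < κ ^ 2 * x := by
    have h : W2 m ν ^ 2 / (2 * κ ^ 2) < x / 2 := by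
      rw [one_div_mul_eq_div] at hν; linarith [hφ ν]
    rw [div_lt_iff₀ (by positivity)] at h
    linarith
  have hx : 0 ≤ x := by nlinarith [sq_nonneg (W2 m ν)]
  refine ⟨ν, by linarith, ?_⟩
  refine lt_of_pow_lt_pow_left₀ 2 (by positivity) ?_
  rwa [mul_pow, Real.sq_sqrt hx]

lemma mul_sqrt_le_Mke {κ ε R x : ℝ} (hκ : 0 ≤ κ) (hx : 0 ≤ x)
    (h : x + 2 * ε * κ * √x ≤ 2 * Sfun mhat φ R) : κ * √x ≤ Mke mhat φ κ ε R := by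
  have : √x + ε * κ ≤ √(2 * Sfun mhat φ R + ε ^ 2 * κ ^ 2) :=
    (le_abs_self _).trans (Real.abs_le_sqrt (by nlinarith [Real.sq_sqrt hx]))
  rw [Mke]
  nlinarith [mul_le_mul_of_nonneg_left this hκ]

lemma UCmem.Mke_nonneg (hφ : UCmem mhat φ) {κ ε R : ℝ} (hκ : 0 ≤ κ) :
    0 ≤ Mke mhat φ κ ε R := by
  simpa using mul_sqrt_le_Mke hκ le_rfl (by simpa using hφ.Sfun_nonneg R)

end UCmem

theorem statement7_general {d : ℕ} (mhat : P2 d) (R : ℝ)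
    (φ : P2 d → ℝ) (hφ : UCmem mhat φ) (κ ε : ℝ) (hκ : κ ∈ Ioc (0 : ℝ) 1)
    (hε : ε ∈ Ioc (0 : ℝ) 1)
    (hsmall : omegaR mhat φ ε R (Mke mhat φ κ ε R)
        + ε * κ * Real.sqrt (Ifun mhat φ R) + ε * Mke mhat φ κ ε R
        < Ifun mhat φ R / 2) :
    GsetK mhat φ κ R ⊆ oballW mhat R := by
  intro m hm
  by_contra hmR
  set I := Ifun mhat φ R
  set ω := omegaR mhat φ ε R (Mke mhat φ κ ε R)
  have hK : 0 ≤ ε * κ * √I := by have := hε.1; have := hκ.1; positivity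
  have hεM : 0 ≤ ε * Mke mhat φ κ ε R := mul_nonneg hε.1.le (hφ.Mke_nonneg hκ.1.le)
  have hω : 0 ≤ ω := omegaR_nonneg _ _ _ _ _
  obtain ⟨x, hIx, hxω, hxS⟩ := exists_gt_and_add_lt_and_add_mul_sqrt_lt
    (show 2 * ω < I by linarith) (show 2 * (ε * κ) * √I < I by linarith)
  obtain ⟨ν, hφν, hmν⟩ := exists_of_two_mul_infConv_lt hφ.nonneg hκ.1 (x := x)
    (by linarith [show infConv φ κ m ≤ I / 2 from hm])
  have hνR : ν ∈ oballW mhat R := by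
    by_contra h
    linarith [hφ.Ifun_le h]
  obtain ⟨μ, hμR, hνμ⟩ := exists_W2_eq_of_le_of_le (le_of_lt hνR) (not_lt.1 hmR)
    (by rwa [W2_symm] at hmν)
  have hIμ : I ≤ φ μ := hφ.Ifun_le (not_lt.2 hμR.ge)
  have hμS : φ μ ≤ Sfun mhat φ R := hφ.le_Sfun hμR.le
  have hνμM : W2 μ ν ≤ Mke mhat φ κ ε R := by
    rw [W2_symm]
    exact hνμ.le.trans (mul_sqrt_le_Mke hκ.1.le (by linarith [hφ.nonneg ν]) (by linarith))
  have hRMe : R ≤ Me mhat φ ε R := le_add_of_nonneg_right (Real.sqrt_nonneg _)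
  linarith [hφ.sub_le_omegaR hνμM (hμR.le.trans hRMe) ((le_of_lt hνR).trans hRMe)]

/-- `G_R^κ ⊆ O_R(m̂)` under a smallness condition. -/
theorem statement7 {d : ℕ} (mhat : P2 d) (R : ℝ) (hR : 0 < R)
    (φ : P2 d → ℝ) (hφ : UCmem mhat φ) (κ ε : ℝ) (hκ : κ ∈ Ioc (0 : ℝ) 1)
    (hε : ε ∈ Ioc (0 : ℝ) 1)
    (hek : ∀ m ∈ GsetK mhat φ κ R, ∃ μb : P2 d, EkelandPt φ κ ε m μb)
    (hsmall : omegaR mhat φ ε R (Mke mhat φ κ ε R)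
        + ε * κ * Real.sqrt (Ifun mhat φ R) + ε * Mke mhat φ κ ε R
        < Ifun mhat φ R / 2) :
    GsetK mhat φ κ R ⊆ oballW mhat R :=
  statement7_general mhat R φ hφ κ ε hκ hε hsmall
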